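/- arXiv:2209.08634 — 8 statements merged into one kernel-verified Lean document; each statement's English description precedes it below -/
import Mathlib

section
/- Let R be a commutative ring in which every odd integer is invertible, and let I be an ideal of R. If (γₙ) and (δₙ) are two divided power structures on I such that γ₂(x) = δ₂(x) for all x ∈ I, then γₙ(x) = δₙ(x) for all n ≥ 0 and all x ∈ I. That is, a divided power structure on an ideal in such a ring is uniquely determined by its second operation γ₂. -/
/-- A divided power structure on an ideal `I` of a commutative ring `R`:
a family of functions `γₙ : I → R` (encoded as `dpow : ℕ → R → R`, constrained on `I`)
satisfying the five axioms of Berthelot–Ogus. -/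
structure DividedPowerStructure (R : Type*) [CommRing R] (I : Ideal R) where
  dpow : ℕ → R → R
  dpow_zero : ∀ x ∈ I, dpow 0 x = 1
  dpow_one : ∀ x ∈ I, dpow 1 x = x
  dpow_mem : ∀ n : ℕ, 0 < n → ∀ x ∈ I, dpow n x ∈ I
  dpow_add : ∀ (n : ℕ), ∀ x ∈ I, ∀ y ∈ I,
    dpow n (x + y) = ∑ i ∈ Finset.range (n + 1), dpow i x * dpow (n - i) y
  dpow_smul : ∀ (n : ℕ) (a : R), ∀ x ∈ I, dpow n (a * x) = a ^ n * dpow n x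
  dpow_mul : ∀ (m n : ℕ), ∀ x ∈ I,
    dpow m x * dpow n x = ((m + n).choose m : R) * dpow (m + n) x
  dpow_comp : ∀ (m n : ℕ), 0 < m → ∀ x ∈ I,
    dpow n (dpow m x) =
      (((m * n).factorial / (m.factorial ^ n * n.factorial) : ℕ) : R) * dpow (m * n) x


/-!
Odd indices are recovered from the previous one by `x γₙ(x) = (n + 1) γₙ₊₁(x)`, and even
indices from a smaller one by `γₘ₊₁(γ₂(x)) = (2m + 1)‼ γ₂ₘ₊₂(x)`. Both coefficients are odd,
hence units, so strong induction on `n` shows that `γ₂` determines every `γₙ`.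
-/

open Nat

theorem Nat.odd_doubleFactorial_two_mul_add_one : ∀ m : ℕ, Odd (2 * m + 1)‼
  | 0 => odd_one
  | m + 1 => by
    rw [show 2 * (m + 1) + 1 = 2 * m + 1 + 2 by ring, doubleFactorial_add_two]
    exact (odd_two_mul_add_one (m + 1)).mul (odd_doubleFactorial_two_mul_add_one m)

theorem Nat.factorial_two_mul_succ_div (m : ℕ) :
    (2 * (m + 1))! / (2! ^ (m + 1) * (m + 1)!) = (2 * m + 1)‼ := by
  rw [show 2 * (m + 1) = 2 * m + 1 + 1 by ring, factorial_eq_mul_doubleFactorial,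
    show 2 * m + 1 + 1 = 2 * (m + 1) by ring, doubleFactorial_two_mul, factorial_two]
  exact Nat.mul_div_cancel_left _ (by positivity)

namespace DividedPowerStructure

variable {R : Type*} [CommRing R] {I : Ideal R} (γ : DividedPowerStructure R I)

theorem succ_mul_dpow_succ (n : ℕ) {x : R} (hx : x ∈ I) :
    ((n + 1 : ℕ) : R) * γ.dpow (n + 1) x = x * γ.dpow n x := by
  have h := γ.dpow_mul 1 n x hx
  rwa [γ.dpow_one x hx, add_comm 1 n, choose_one_right, eq_comm] at h

theorem doubleFactorial_mul_dpow_two_mul_succ (m : ℕ) {x : R} (hx : x ∈ I) :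
    ((2 * m + 1)‼ : R) * γ.dpow (2 * (m + 1)) x = γ.dpow (m + 1) (γ.dpow 2 x) := by
  rw [γ.dpow_comp 2 (m + 1) two_pos x hx, factorial_two_mul_succ_div]

end DividedPowerStructure

/-- A divided power structure on an ideal of a ring in which every odd integer is
invertible is uniquely determined by its second operation `γ₂`. -/
theorem dividedPowerStructure_ext_of_gamma_two_eq
    (R : Type*) [CommRing R] (I : Ideal R)
    (hodd : ∀ n : ℤ, Odd n → IsUnit (n : R))
    (γ δ : DividedPowerStructure R I)
    (h2 : ∀ x ∈ I, γ.dpow 2 x = δ.dpow 2 x) :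
    ∀ (n : ℕ), ∀ x ∈ I, γ.dpow n x = δ.dpow n x := by
  have hunit : ∀ n : ℕ, Odd n → IsUnit (n : R) := fun n hn => by
    simpa using hodd n (Int.odd_coe_nat n |>.mpr hn)
  intro n
  induction n using Nat.strong_induction_on with
  | _ n ih =>
    intro x hx
    obtain ⟨k, rfl | rfl⟩ := n.even_or_odd'
    · cases k with
      | zero => rw [γ.dpow_zero x hx, δ.dpow_zero x hx]
      | succ m =>
        have hγ2 : γ.dpow 2 x ∈ I := γ.dpow_mem 2 two_pos x hx
        apply (hunit _ (odd_doubleFactorial_two_mul_add_one m)).mul_left_cancel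
        rw [γ.doubleFactorial_mul_dpow_two_mul_succ m hx,
          δ.doubleFactorial_mul_dpow_two_mul_succ m hx, ih (m + 1) (by omega) _ hγ2, h2 x hx]
    · apply (hunit _ (odd_two_mul_add_one k)).mul_left_cancel
      rw [γ.succ_mul_dpow_succ _ hx, δ.succ_mul_dpow_succ _ hx, ih (2 * k) (by omega) x hx]
end

section
/- Define the tangent numbers T(n,i) for natural numbers n, i by the recurrence T(0,0) = 1, T(0,i) = 0 for i > 0, and T(n+1,i) = T(n,i−1) + i·(i+1)·T(n,i+1), where the term T(n,i−1) is omitted when i = 0. Then for every natural number i and every real number t with |t| < π/2, the series Σ_{n≥0} i!·T(n,i)·tⁿ/n! converges and its sum equals (tan t)^i. In other words, (tan t)^i / i! = Σ_{n≥0} T(n,i)·tⁿ/n! on (−π/2, π/2). -/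
/-- The tangent numbers `T(n,i)`, defined by `T(0,0) = 1`, `T(0,i) = 0` for `i > 0`, and
`T(n+1,i) = T(n,i-1) + i·(i+1)·T(n,i+1)`, the first term being omitted when `i = 0`.
They are the coefficients in `(tan t)^i / i! = Σ_{n≥i} T(n,i)·tⁿ/n!`. -/
def tangentNumber : ℕ → ℕ → ℕ
  | 0, i => if i = 0 then 1 else 0
  | n + 1, i => (if i = 0 then 0 else tangentNumber n (i - 1))
      + i * (i + 1) * tangentNumber n (i + 1)

/-!
On the disc `‖z‖ < π/2` the cosine has no zeros, so `tan z ^ i` is holomorphic there and equals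
its Taylor series at `0` on the whole disc. Since `(tan ^ i)' = i tan ^ (i - 1) + i tan ^ (i + 1)`,
the derivatives `i! · T(n, i)` satisfy the same recurrence in `n` as the `n`-th derivatives of
`tan ^ i` at `0`, and both start from `tan 0 ^ i = [i = 0]`.
-/

open scoped Nat

namespace Complex

theorem cos_ne_zero_of_norm_lt_pi_div_two {z : ℂ} (hz : ‖z‖ < Real.pi / 2) : cos z ≠ 0 := by
  refine cos_ne_zero_iff.mpr fun k hk => hz.not_ge ?_
  have hodd : (1 : ℝ) ≤ |2 * (k : ℝ) + 1| := by exact_mod_cast Int.one_le_abs (by omega)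
  calc Real.pi / 2 ≤ |2 * (k : ℝ) + 1| * Real.pi / 2 := by nlinarith [Real.pi_pos]
    _ = ‖z‖ := by
      rw [hk]
      norm_cast
      simp [abs_of_pos Real.pi_pos]

theorem hasDerivAt_tan_pow (i : ℕ) {z : ℂ} (hz : cos z ≠ 0) :
    HasDerivAt (fun w => tan w ^ i) (i * tan z ^ (i - 1) + i * tan z ^ (i + 1)) z := by
  refine ((hasDerivAt_tan hz).pow i).congr_deriv ?_
  rw [one_div, ← inv_one_add_tan_sq hz, inv_inv]
  rcases i with _ | i
  · simp
  · simp only [add_tsub_cancel_right]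
    ring

theorem iteratedDeriv_tan_pow_zero (n i : ℕ) :
    iteratedDeriv n (fun z => tan z ^ i) 0 = i ! * tangentNumber n i := by
  induction n generalizing i with
  | zero => rcases i with _ | i <;> simp [tangentNumber]
  | succ n ih =>
    have hcos : ∀ᶠ z in nhds (0 : ℂ), cos z ≠ 0 :=
      continuous_cos.continuousAt.eventually_ne (by simp)
    have hderiv : deriv (fun w => tan w ^ i) =ᶠ[nhds 0]
        fun z => i * tan z ^ (i - 1) + i * tan z ^ (i + 1) :=
      hcos.mono fun z hz => (hasDerivAt_tan_pow i hz).deriv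
    have hsmooth (k : ℕ) : ContDiffAt ℂ n (fun z => (i : ℂ) * tan z ^ k) 0 :=
      contDiffAt_const.mul ((contDiffAt_tan.mpr (by simp)).pow k)
    rw [iteratedDeriv_succ', hderiv.iteratedDeriv_eq, iteratedDeriv_fun_add (hsmooth _) (hsmooth _),
      iteratedDeriv_const_mul_field, iteratedDeriv_const_mul_field, ih, ih]
    rcases i with _ | i
    · simp [tangentNumber]
    · simp only [tangentNumber, add_tsub_cancel_right, Nat.factorial_succ]
      push_cast
      ring

theorem differentiableOn_tan_pow_ball (i : ℕ) :
    DifferentiableOn ℂ (fun z => tan z ^ i) (Metric.ball 0 (Real.pi / 2)) := fun _ hz =>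
  ((differentiableAt_tan.mpr (cos_ne_zero_of_norm_lt_pi_div_two (mem_ball_zero_iff.mp hz))).pow
    i).differentiableWithinAt

end Complex

open Real in
/-- For every `i` and `|t| < π/2`, the series `Σₙ i!·T(n,i)·tⁿ/n!` converges, with sum
`(tan t)^i`; that is, `(tan t)^i / i! = Σ_{n≥0} T(n,i)·tⁿ/n!` on `(-π/2, π/2)`. -/
theorem hasSum_tangentNumber_tan_pow
    (i : ℕ) (t : ℝ) (ht : |t| < Real.pi / 2) :
    HasSum (fun n : ℕ =>
        (Nat.factorial i : ℝ) * (tangentNumber n i : ℝ) * t ^ n / (Nat.factorial n : ℝ))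
      (Real.tan t ^ i) := by
  have ht' : (t : ℂ) ∈ Metric.ball 0 (π / 2) := by simpa using ht
  have h := Complex.hasSum_taylorSeries_on_ball (Complex.differentiableOn_tan_pow_ball i) ht'
  simp only [sub_zero, Complex.iteratedDeriv_tan_pow_zero, smul_eq_mul] at h
  have hterms : (fun n : ℕ => ((i ! * tangentNumber n i * t ^ n / n ! : ℝ) : ℂ)) =
      fun n => (n ! : ℂ)⁻¹ * ((t : ℂ) ^ n * (i ! * tangentNumber n i)) := by
    ext n
    push_cast
    ring
  rwa [← Complex.hasSum_ofReal, hterms, Complex.ofReal_pow, Complex.ofReal_tan]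
end

section
/- Let a(n,i) ∈ ℚ, for natural numbers n, i, be the unique solution of the recurrence a(0,0) = 1, a(0,i) = 0 for i > 0, and a(n+1,i) = (i/(n+1))·(a(n,i−1) − a(n,i+1)), where the term a(n,i−1) is omitted when i = 0. Then a(n,i) = 0 when n ≢ i (mod 2), and a(n,i) = (−1)^{(n−i)/2}·(i!/n!)·T(n,i) when n ≡ i (mod 2), where T(n,i) are the tangent numbers. -/
open Nat

lemma tangentNumber_eq_zero_of_lt {n i : ℕ} (h : n < i) : tangentNumber n i = 0 := by
  induction n generalizing i with
  | zero => simp [tangentNumber, h.ne']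
  | succ n ih => simp [tangentNumber, ih (by omega : n < i - 1), ih (by omega : n < i + 1)]

lemma tangentNumber_succ_zero (n : ℕ) : tangentNumber (n + 1) 0 = 0 := by
  simp [tangentNumber]

lemma tangentNumber_succ_succ (n j : ℕ) :
    tangentNumber (n + 1) (j + 1)
      = tangentNumber n j + (j + 1) * (j + 2) * tangentNumber n (j + 2) := by
  simp [tangentNumber]

def signedTangentNumber (n i : ℕ) : ℤ :=
  if n % 2 = i % 2 then (-1) ^ ((n - i) / 2) * tangentNumber n i else 0

lemma signedTangentNumber_zero_left (i : ℕ) :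
    signedTangentNumber 0 i = if i = 0 then 1 else 0 := by
  rcases i.eq_zero_or_pos with rfl | hi
  · simp [signedTangentNumber, tangentNumber]
  · simp [signedTangentNumber, tangentNumber, hi.ne']

/-- Despite the truncated subtractions this holds for all `n`: for `n < j + 2` both sides vanish. -/
lemma neg_one_pow_mul_tangentNumber_add_two (n j : ℕ) :
    (-1 : ℤ) ^ ((n - j) / 2) * tangentNumber n (j + 2)
      = -((-1) ^ ((n - (j + 2)) / 2) * tangentNumber n (j + 2)) := by
  rcases lt_or_ge n (j + 2) with hn | hn
  · simp [tangentNumber_eq_zero_of_lt hn]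
  · rw [show (n - j) / 2 = (n - (j + 2)) / 2 + 1 by omega, pow_succ]
    ring

lemma signedTangentNumber_succ (n i : ℕ) :
    signedTangentNumber (n + 1) i
      = (if i = 0 then 0 else signedTangentNumber n (i - 1))
        - i * (i + 1) * signedTangentNumber n (i + 1) := by
  rcases i with _ | j
  · simp [signedTangentNumber, tangentNumber_succ_zero]
  by_cases hp : n % 2 = j % 2
  · simp only [signedTangentNumber, if_pos (show (n + 1) % 2 = (j + 1) % 2 by omega), if_pos hp,
      if_pos (show n % 2 = (j + 1 + 1) % 2 by omega), tangentNumber_succ_succ,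
      Nat.add_sub_add_right, Nat.add_sub_cancel, add_eq_zero, one_ne_zero, and_false, if_false]
    push_cast
    linear_combination (↑j + 1) * (↑j + 2) * neg_one_pow_mul_tangentNumber_add_two n j
  · simp only [signedTangentNumber, if_neg (show (n + 1) % 2 ≠ (j + 1) % 2 by omega),
      if_neg (show n % 2 ≠ (j + 1 + 1) % 2 by omega)]
    simp [hp]

lemma factorial_div_mul_succ_of_recurrence {a : ℕ → ℕ → ℚ}
    (hrec : ∀ n i : ℕ, a (n + 1) i =
      ((i : ℚ) / ((n : ℚ) + 1)) * ((if i = 0 then 0 else a n (i - 1)) - a n (i + 1)))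
    (n i : ℕ) :
    ((n + 1)! / i ! : ℚ) * a (n + 1) i
      = (if i = 0 then 0 else (n ! / (i - 1)! : ℚ) * a n (i - 1))
        - i * (i + 1) * ((n ! / (i + 1)! : ℚ) * a n (i + 1)) := by
  rw [hrec]
  rcases i with _ | j
  · simp
  · simp only [Nat.add_sub_cancel, add_eq_zero, one_ne_zero, and_false, if_false, factorial_succ]
    push_cast
    field_simp

lemma factorial_div_mul_eq_signedTangentNumber {a : ℕ → ℕ → ℚ} (h00 : a 0 0 = 1)
    (h0 : ∀ i : ℕ, 0 < i → a 0 i = 0)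
    (hrec : ∀ n i : ℕ, a (n + 1) i =
      ((i : ℚ) / ((n : ℚ) + 1)) * ((if i = 0 then 0 else a n (i - 1)) - a n (i + 1)))
    (n i : ℕ) :
    (n ! / i ! : ℚ) * a n i = signedTangentNumber n i := by
  induction n generalizing i with
  | zero =>
    rcases i.eq_zero_or_pos with rfl | hi
    · simp [signedTangentNumber_zero_left, h00]
    · simp [signedTangentNumber_zero_left, h0 i hi, hi.ne']
  | succ n ih =>
    rw [factorial_div_mul_succ_of_recurrence hrec, signedTangentNumber_succ, ih, ih]
    push_cast [apply_ite]
    rfl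

/-- If `a : ℕ → ℕ → ℚ` satisfies `a(0,0) = 1`, `a(0,i) = 0` for `i > 0`, and
`a(n+1,i) = (i/(n+1))·(a(n,i−1) − a(n,i+1))` (first term omitted when `i = 0`), then
`a(n,i) = 0` when `n ≢ i (mod 2)` and
`a(n,i) = (−1)^{(n−i)/2}·(i!/n!)·T(n,i)` when `n ≡ i (mod 2)`. -/
theorem recurrence_solution_eq_tangentNumber
    (a : ℕ → ℕ → ℚ)
    (h00 : a 0 0 = 1)
    (h0 : ∀ i : ℕ, 0 < i → a 0 i = 0)
    (hrec : ∀ n i : ℕ, a (n + 1) i =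
      ((i : ℚ) / ((n : ℚ) + 1)) * ((if i = 0 then 0 else a n (i - 1)) - a n (i + 1))) :
    ∀ n i : ℕ,
      (n % 2 ≠ i % 2 → a n i = 0) ∧
      (n % 2 = i % 2 → a n i =
        (-1) ^ ((n - i) / 2) * ((Nat.factorial i : ℚ) / (Nat.factorial n : ℚ))
          * (tangentNumber n i : ℚ)) := by
  intro n i
  have ha : a n i = (i ! / n ! : ℚ) * signedTangentNumber n i := by
    rw [← factorial_div_mul_eq_signedTangentNumber h00 h0 hrec]
    field_simp
  rw [ha, signedTangentNumber]
  refine ⟨fun hp => by simp [hp], fun hp => ?_⟩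
  simp only [hp, if_true]
  push_cast
  ring
end

section
/- Let T(n,i) be the tangent numbers and let i ≤ n be natural numbers with n ≡ i (mod 2); set j = (n−i)/2. Then, as integers, 2^{v₂(n!)+1} divides i!·T(n,i) − C(n,j)·n!, where v₂ denotes the 2-adic valuation and C(n,j) is the binomial coefficient. Equivalently, the 2-local integer (i!/n!)·T(n,i) is congruent to the binomial coefficient C(n,(n−i)/2) modulo 2: the coefficients of the divided powers in terms of exterior powers simplify modulo 2 to binomial coefficients. -/
open Finset
open scoped Nat

def binomialConv {R : Type*} [CommSemiring R] (a b : ℕ → R) (n : ℕ) : R :=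
  ∑ x ∈ antidiagonal n, n.choose x.1 * (a x.1 * b x.2)

section binomialConv

variable {R : Type*} [CommSemiring R] (a a' b b' : ℕ → R) (c : R) (n : ℕ)

theorem binomialConv_succ :
    binomialConv a b (n + 1) =
      binomialConv a (fun m => b (m + 1)) n + binomialConv (fun m => a (m + 1)) b n := by
  unfold binomialConv
  rw [sum_antidiagonal_choose_succ_mul (fun i j => a i * b j)]
  congr 1
  refine sum_congr rfl fun x hx => ?_
  rw [Nat.choose_symm_of_eq_add (mem_antidiagonal.1 hx).symm]

theorem binomialConv_mul_add_left :
    binomialConv (fun m => c * (a m + a' m)) b n =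
      c * (binomialConv a b n + binomialConv a' b n) := by
  simp only [binomialConv, ← sum_add_distrib, mul_sum]
  exact sum_congr rfl fun _ _ => by ring

theorem binomialConv_mul_add_right :
    binomialConv a (fun m => c * (b m + b' m)) n =
      c * (binomialConv a b n + binomialConv a b' n) := by
  simp only [binomialConv, ← sum_add_distrib, mul_sum]
  exact sum_congr rfl fun _ _ => by ring

end binomialConv

def tanPowCoeff (n i : ℕ) : ℤ := i ! * tangentNumber n i

theorem tanPowCoeff_zero_left (i : ℕ) : tanPowCoeff 0 i = if i = 0 then 1 else 0 := by
  by_cases hi : i = 0 <;> simp [tanPowCoeff, tangentNumber, hi]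

theorem tanPowCoeff_succ_left (n i : ℕ) :
    tanPowCoeff (n + 1) i = i * (tanPowCoeff n (i - 1) + tanPowCoeff n (i + 1)) := by
  rcases i with _ | i
  · simp [tanPowCoeff, tangentNumber]
  · simp only [tanPowCoeff, tangentNumber, Nat.add_sub_cancel, Nat.factorial_succ]
    push_cast
    ring

theorem tangentNumber_eq_zero_of_odd {n i : ℕ} (h : Odd (n + i)) : tangentNumber n i = 0 := by
  induction n generalizing i with
  | zero =>
    rw [zero_add] at h
    simp [tangentNumber, h.pos.ne']
  | succ n ih =>
    have h2 : tangentNumber n (i + 1) = 0 := ih (by rw [Nat.odd_iff] at h ⊢; omega)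
    rcases i with _ | i
    · simp [tangentNumber, h2]
    · simp [tangentNumber, h2, ih (i := i) (by rw [Nat.odd_iff] at h ⊢; omega)]

theorem binomialConv_tanPowCoeff (n i j : ℕ) :
    binomialConv (tanPowCoeff · i) (tanPowCoeff · j) n = tanPowCoeff n (i + j) := by
  induction n generalizing i j with
  | zero =>
    by_cases hi : i = 0 <;> by_cases hj : j = 0 <;>
      simp [binomialConv, tanPowCoeff_zero_left, hi, hj]
  | succ n ih =>
    simp only [binomialConv_succ, tanPowCoeff_succ_left, binomialConv_mul_add_left,
      binomialConv_mul_add_right, ih]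
    rcases i with _ | i
    · simp
    rcases j with _ | j
    · simp
    rw [show i + 1 + (j + 1) - 1 = i + (j + 1) by omega, Nat.add_sub_cancel, Nat.add_sub_cancel]
    push_cast
    -- `ring_nf` also normalizes the indices `i + 1 + j`, `i + 1 + (j + 1 + 1)`, ...
    ring_nf

/-- The coefficient of `x ^ i` in `(x + x⁻¹) ^ n`. -/
def walkChoose (n i : ℕ) : ℕ := if Even (n + i) then n.choose ((n + i) / 2) else 0

theorem walkChoose_zero_left (i : ℕ) : walkChoose 0 i = if i = 0 then 1 else 0 := by
  by_cases hi : i = 0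
  · simp [walkChoose, hi]
  · rw [if_neg hi, walkChoose, zero_add]
    split_ifs with h
    · exact Nat.choose_eq_zero_of_lt (by obtain ⟨m, rfl⟩ := h; omega)
    · rfl

theorem walkChoose_succ_succ (n i : ℕ) :
    walkChoose (n + 1) (i + 1) = walkChoose n i + walkChoose n (i + 2) := by
  have hpar : Even (n + i + 2) ↔ Even (n + i) := by simp [Nat.even_add]
  simp only [walkChoose, show n + 1 + (i + 1) = n + i + 2 by omega, ← add_assoc, hpar]
  split_ifs
  · rw [show (n + i + 2) / 2 = (n + i) / 2 + 1 by omega, Nat.choose_succ_succ]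
  · rfl

theorem two_dvd_walkChoose_succ_zero (n : ℕ) : 2 ∣ walkChoose (n + 1) 0 := by
  unfold walkChoose
  split_ifs with h
  · obtain ⟨m, hm⟩ := h
    rw [add_zero, hm, ← two_mul, Nat.mul_div_cancel_left _ two_pos,
      ← Nat.centralBinom_eq_two_mul_choose]
    exact Nat.two_dvd_centralBinom_of_one_le (by omega)
  · exact dvd_zero 2

theorem sum_antidiagonal_walkChoose_mul (n i j : ℕ) :
    ∑ x ∈ antidiagonal n, (walkChoose x.1 i * walkChoose x.2 j : ZMod 2) =
      walkChoose n (i + j) := by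
  induction n generalizing i with
  | zero => by_cases hi : i = 0 <;> by_cases hj : j = 0 <;> simp [walkChoose_zero_left, hi, hj]
  | succ n ih =>
    rw [Nat.sum_antidiagonal_succ]
    rcases i with _ | i
    · have hzero (m : ℕ) : (walkChoose (m + 1) 0 : ZMod 2) = 0 :=
        (ZMod.natCast_eq_zero_iff _ _).2 (two_dvd_walkChoose_succ_zero m)
      simp [hzero, walkChoose_zero_left]
    · simp only [walkChoose_succ_succ, walkChoose_zero_left, Nat.cast_add, add_mul,
        sum_add_distrib, ih]
      rw [if_neg i.succ_ne_zero, Nat.cast_zero, zero_mul, zero_add,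
        show i + 1 + j = i + j + 1 by omega, walkChoose_succ_succ,
        show i + 2 + j = i + j + 2 by omega, Nat.cast_add]

theorem padicValNat_factorial_add (p k l : ℕ) [Fact p.Prime] :
    padicValNat p (k + l)! =
      padicValNat p ((k + l).choose k) + padicValNat p k ! + padicValNat p l ! := by
  have hC : (k + l).choose k ≠ 0 := (Nat.choose_pos (Nat.le_add_right k l)).ne'
  rw [← Nat.choose_mul_factorial_mul_factorial (Nat.le_add_right k l), Nat.add_sub_cancel_left,
    padicValNat.mul (Nat.mul_ne_zero hC (Nat.factorial_ne_zero k)) (Nat.factorial_ne_zero l),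
    padicValNat.mul hC (Nat.factorial_ne_zero k)]

theorem intCast_pow_padicValNat_dvd (p m : ℕ) : (p : ℤ) ^ padicValNat p m ∣ m :=
  mod_cast pow_padicValNat_dvd

/-- `x / n! ≡ y (mod p)` in `ℤ_(p)`. -/
def FactorialModEq (p n : ℕ) (x y : ℤ) : Prop :=
  (p : ℤ) ^ (padicValNat p n ! + 1) ∣ x - n ! * y

namespace FactorialModEq

variable {p n : ℕ} {x x' y y' : ℤ}

theorem of_eq (h : x = n ! * y) : FactorialModEq p n x y := by
  rw [FactorialModEq, h, sub_self]
  exact dvd_zero _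

theorem add (h : FactorialModEq p n x y) (h' : FactorialModEq p n x' y') :
    FactorialModEq p n (x + x') (y + y') := by
  unfold FactorialModEq at *
  exact (dvd_add h h').trans (dvd_of_eq (by ring))

theorem trans_modEq (h : FactorialModEq p n x y) (hy : y ≡ y' [ZMOD p]) :
    FactorialModEq p n x y' := by
  have hfac := mul_dvd_mul (intCast_pow_padicValNat_dvd p n !) hy.dvd
  unfold FactorialModEq at *
  rw [pow_succ] at *
  exact (dvd_sub h hfac).trans (dvd_of_eq (by ring))

theorem succ_of_dvd [Fact p.Prime] (hn : p ∣ n) (h : FactorialModEq p n x y) :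
    FactorialModEq p (n + 1) x y := by
  have hsucc : ¬p ∣ n + 1 := fun h' =>
    (Fact.out : p.Prime).not_dvd_one ((Nat.dvd_add_right hn).1 h')
  have hv : padicValNat p (n + 1)! = padicValNat p n ! := by
    rw [Nat.factorial_succ, padicValNat.mul n.succ_ne_zero (Nat.factorial_ne_zero n),
      padicValNat.eq_zero_of_not_dvd hsucc, zero_add]
  have hfac := mul_dvd_mul (intCast_pow_padicValNat_dvd p n !) (Int.natCast_dvd_natCast.2 hn)
  unfold FactorialModEq at *
  rw [hv, pow_succ]
  refine (dvd_sub h (hfac.mul_right y)).trans (dvd_of_eq ?_)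
  push_cast [Nat.factorial_succ]
  ring

end FactorialModEq

theorem factorialModEq_binomialConv {p n : ℕ} [Fact p.Prime] {a a' b b' : ℕ → ℤ}
    (ha : ∀ k ≤ n, FactorialModEq p k (a k) (b k))
    (ha' : ∀ k ≤ n, FactorialModEq p k (a' k) (b' k)) :
    FactorialModEq p n (binomialConv a a' n) (∑ x ∈ antidiagonal n, b x.1 * b' x.2) := by
  unfold FactorialModEq binomialConv
  rw [mul_sum, ← sum_sub_distrib]
  refine dvd_sum fun ⟨k, l⟩ hkl => ?_
  obtain rfl : k + l = n := mem_antidiagonal.1 hkl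
  obtain ⟨e, he⟩ := ha k (Nat.le_add_right k l)
  obtain ⟨e', he'⟩ := ha' l (Nat.le_add_left l k)
  have hd := intCast_pow_padicValNat_dvd p
  have hfac : ((k + l)! : ℤ) = (k + l).choose k * k ! * l ! := by
    rw [← Nat.choose_mul_factorial_mul_factorial (Nat.le_add_right k l), Nat.add_sub_cancel_left]
    push_cast
    rfl
  have hsplit : (k + l).choose k * (a k * a' l) - (k + l)! * (b k * b' l) =
      (k + l).choose k * k ! * p ^ (padicValNat p l ! + 1) * (b k * e')
        + (k + l).choose k * l ! * p ^ (padicValNat p k ! + 1) * (b' l * e)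
        + (k + l).choose k * p ^ (padicValNat p k ! + 1) * p ^ (padicValNat p l ! + 1)
          * (e * e') := by
    rw [hfac, eq_add_of_sub_eq he, eq_add_of_sub_eq he']
    ring
  have hpow : (p : ℤ) ^ (padicValNat p (k + l)! + 1) =
      p ^ padicValNat p ((k + l).choose k) * p ^ padicValNat p k ! * p ^ padicValNat p l ! * p := by
    rw [padicValNat_factorial_add]
    ring
  rw [hsplit, hpow]
  refine dvd_add (dvd_add ?_ ?_) ?_ <;> refine Dvd.dvd.mul_right ?_ _
  · exact (dvd_of_eq (by ring)).trans (mul_dvd_mul (mul_dvd_mul (hd _) (hd k !)) dvd_rfl)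
  · exact (dvd_of_eq (by ring)).trans (mul_dvd_mul (mul_dvd_mul (hd _) (hd l !)) dvd_rfl)
  · exact (dvd_of_eq (by ring)).trans
      (mul_dvd_mul (mul_dvd_mul (hd _) (pow_dvd_pow _ (padicValNat p k !).le_succ)) dvd_rfl)

theorem factorialModEq_tanPowCoeff_zero (n : ℕ) :
    FactorialModEq 2 n (tanPowCoeff n 0) (walkChoose n 0) := by
  rcases n with _ | m
  · exact .of_eq (by simp [tanPowCoeff_zero_left, walkChoose_zero_left])
  · refine (FactorialModEq.of_eq (y := 0) (by simp [tanPowCoeff_succ_left])).trans_modEq ?_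
    exact (Int.modEq_zero_iff_dvd.2 (mod_cast two_dvd_walkChoose_succ_zero m)).symm

theorem factorialModEq_tanPowCoeff_one_succ {m : ℕ}
    (h0 : FactorialModEq 2 m (tanPowCoeff m 0) (walkChoose m 0))
    (h2 : FactorialModEq 2 m (tanPowCoeff m 2) (walkChoose m 2)) :
    FactorialModEq 2 (m + 1) (tanPowCoeff (m + 1) 1) (walkChoose (m + 1) 1) := by
  rcases Nat.even_or_odd m with hm | hm
  · rw [tanPowCoeff_succ_left, walkChoose_succ_succ]
    push_cast
    simpa using (h0.add h2).succ_of_dvd (even_iff_two_dvd.1 hm)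
  · have hodd : Odd (m + 1 + 1) := by simpa [parity_simps] using hm
    exact .of_eq (by simp [tanPowCoeff, tangentNumber_eq_zero_of_odd hodd, walkChoose,
      Nat.not_even_iff_odd.2 hodd])

theorem factorialModEq_tanPowCoeff (n i : ℕ) :
    FactorialModEq 2 n (tanPowCoeff n i) (walkChoose n i) := by
  induction n using Nat.strong_induction_on generalizing i with
  | _ n ih =>
  have below {j : ℕ} (hj : FactorialModEq 2 n (tanPowCoeff n j) (walkChoose n j)) :
      ∀ k ≤ n, FactorialModEq 2 k (tanPowCoeff k j) (walkChoose k j) := fun k hk =>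
    (Nat.lt_or_eq_of_le hk).elim (ih k · j) (· ▸ hj)
  have h1 : FactorialModEq 2 n (tanPowCoeff n 1) (walkChoose n 1) := by
    rcases n with _ | m
    · exact .of_eq (by simp [tanPowCoeff_zero_left, walkChoose_zero_left])
    · exact factorialModEq_tanPowCoeff_one_succ (ih m m.lt_succ_self 0) (ih m m.lt_succ_self 2)
  induction i with
  | zero => exact factorialModEq_tanPowCoeff_zero n
  | succ i ihi =>
    rcases i with _ | i
    · exact h1
    rw [← binomialConv_tanPowCoeff]
    refine (factorialModEq_binomialConv (below ihi) (below h1)).trans_modEq ?_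
    exact (ZMod.intCast_eq_intCast_iff _ _ 2).1
      (by push_cast; exact sum_antidiagonal_walkChoose_mul n _ 1)

/-- For `i ≤ n` with `n ≡ i (mod 2)` and `j = (n−i)/2`, the integer
`i!·T(n,i) − C(n,j)·n!` is divisible by `2^{v₂(n!)+1}`: the 2-local integer
`(i!/n!)·T(n,i)` is congruent to the binomial coefficient `C(n,(n−i)/2)` modulo 2. -/
theorem factorial_mul_tangentNumber_congr_choose
    (n i : ℕ) (hin : i ≤ n) (hpar : n % 2 = i % 2) :
    (2 : ℤ) ^ (padicValNat 2 (Nat.factorial n) + 1) ∣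
      (Nat.factorial i * tangentNumber n i : ℤ)
        - (n.choose ((n - i) / 2) * Nat.factorial n : ℤ) := by
  have hwalk : walkChoose n i = n.choose ((n - i) / 2) := by
    rw [walkChoose, if_pos (Nat.even_iff.2 (by omega)), ← Nat.choose_symm (by omega)]
    congr 1
    omega
  have h := factorialModEq_tanPowCoeff n i
  rwa [FactorialModEq, hwalk, mul_comm] at h
end

section
/- Let e, N, l be natural numbers with 2^e dividing N, 0 < l < 2^e, and N ≥ 2l. Then the binomial coefficient C(N − 2l, 2^e − l) is even. (This is the vanishing modulo 2 of the cross terms in the product formula for λ^{2^{i₀}}(x)·λ^m(x) used in the proof that the divided powers reduce to binomial coefficients mod 2.) -/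
/-!
Write `l = 2^v m` with `m` odd; then `v < e`, so both `N - 2l` and `2^e - l` are `2^v` times
an integer. Lucas's theorem strips the common factor `2^v` modulo 2, leaving a binomial
coefficient `C(2^(e-v) c - 2m, 2^(e-v) - m)` with even top and odd bottom, and such a
coefficient is even because its lowest binary digits are `C(0, 1) = 0`.
-/

theorem Nat.two_dvd_choose_of_even_of_odd {n k : ℕ} (hn : Even n) (hk : Odd k) :
    2 ∣ n.choose k := by
  apply Nat.dvd_of_mod_eq_zero
  have := Choose.choose_modEq_choose_mod_mul_choose_div_nat (n := n) (k := k) (p := 2)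
  rwa [Nat.even_iff.mp hn, Nat.odd_iff.mp hk, Nat.choose_zero_succ, zero_mul] at this

theorem choose_sub_even_general
    (e N l : ℕ) (hN : 2 ^ e ∣ N) (hl : 0 < l) (hl' : l < 2 ^ e) :
    2 ∣ (N - 2 * l).choose (2 ^ e - l) := by
  obtain ⟨v, m, hm, rfl⟩ := Nat.exists_eq_two_pow_mul_odd hl.ne'
  obtain ⟨c, rfl⟩ := hN
  have hv : v < e :=
    (Nat.pow_lt_pow_iff_right one_lt_two).mp ((Nat.le_mul_of_pos_right _ hm.pos).trans_lt hl')
  obtain ⟨d, rfl⟩ := Nat.exists_eq_add_of_lt hv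
  have hmd : m < 2 ^ (d + 1) := by
    rw [add_assoc, pow_add] at hl'
    exact Nat.lt_of_mul_lt_mul_left hl'
  have htop : 2 ^ (v + d + 1) * c - 2 * (2 ^ v * m) = 2 ^ v * (2 * (2 ^ d * c - m)) := by
    simp only [Nat.mul_sub, pow_add, pow_one]
    ring_nf
  have hbot : 2 ^ (v + d + 1) - 2 ^ v * m = 2 ^ v * (2 ^ (d + 1) - m) := by
    rw [Nat.mul_sub, ← pow_add, add_assoc]
  rw [htop, hbot, Nat.dvd_iff_mod_eq_zero, Choose.choose_pow_mul_pow_mul_modEq_choose_nat,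
    ← Nat.dvd_iff_mod_eq_zero]
  exact Nat.two_dvd_choose_of_even_of_odd (even_two_mul _)
    (Nat.Even.sub_odd hmd.le (Nat.even_pow.mpr ⟨even_two, d.succ_ne_zero⟩) hm)

/-- If `2^e ∣ N`, `0 < l < 2^e`, and `N ≥ 2l`, then `C(N − 2l, 2^e − l)` is even. -/
theorem choose_sub_even
    (e N l : ℕ) (hN : 2 ^ e ∣ N) (hl : 0 < l) (hl' : l < 2 ^ e) (hNl : 2 * l ≤ N) :
    2 ∣ (N - 2 * l).choose (2 ^ e - l) :=
  choose_sub_even_general e N l hN hl hl'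
end

section
/- Let R be a commutative ring in which 2 = 0, let I be an ideal of R, and let (γₙ) be a divided power structure on I. Then for every r ≥ 0 and every x ∈ I, γ_{2^r}(x) equals the r-fold iterate of γ₂ applied to x: γ_{2^r}(x) = γ₂(γ₂(⋯γ₂(x)⋯)) (r applications). (This uses that the coefficient (2^{r+1})!/((2^r)!²·2!) in the composition axiom is odd, hence equals 1 in R.) -/
namespace Nat

theorem factorial_mul_two_div (m : ℕ) :
    (m * 2)! / (m ! ^ 2 * 2 !) = centralBinom m / 2 := by
  have h : (m * 2)! = centralBinom m * m ! ^ 2 := by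
    rw [centralBinom_eq_two_mul_choose, mul_two, two_mul, sq, ← mul_assoc,
      add_choose_mul_factorial_mul_factorial]
  rw [h, factorial_two, ← Nat.div_div_eq_div_mul, Nat.mul_div_cancel _ (by positivity)]

/-- Kummer: adding `2 ^ r` to itself in base `2` produces exactly one carry. -/
theorem odd_centralBinom_two_pow_div_two (r : ℕ) : Odd (centralBinom (2 ^ r) / 2) := by
  have hval : (centralBinom (2 ^ r)).factorization 2 = 1 := by
    rw [centralBinom_eq_two_mul_choose, ← pow_succ',
      factorization_choose_prime_pow prime_two (pow_le_pow_right₀ one_le_two r.le_succ)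
        (by positivity), factorization_pow_self prime_two]
    omega
  have not_four_dvd : ¬ 2 ^ 2 ∣ centralBinom (2 ^ r) := by
    rw [prime_two.pow_dvd_iff_le_factorization (centralBinom_ne_zero _), hval]
    omega
  obtain ⟨q, hq⟩ := two_dvd_centralBinom_of_one_le (Nat.two_pow_pos r)
  rw [hq] at not_four_dvd ⊢
  rw [Nat.mul_div_cancel_left q two_pos, Nat.odd_iff]
  omega

end Nat

theorem Nat.cast_eq_one_of_odd {R : Type*} [Semiring R] (h2 : (2 : R) = 0) {n : ℕ} (hn : Odd n) :
    (n : R) = 1 := by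
  obtain ⟨k, rfl⟩ := hn
  simp [h2]

namespace DividedPowerStructure

open Nat

variable {R : Type*} [CommRing R] {I : Ideal R}

theorem dpow_two_dpow (γ : DividedPowerStructure R I) {m : ℕ} (hm : 0 < m) {x : R} (hx : x ∈ I) :
    γ.dpow 2 (γ.dpow m x) = ((centralBinom m / 2 : ℕ) : R) * γ.dpow (m * 2) x := by
  rw [γ.dpow_comp m 2 hm x hx, factorial_mul_two_div]

end DividedPowerStructure

/-- In a ring where `2 = 0`, the divided power `γ_{2^r}` is the `r`-fold iterate of `γ₂`. -/
theorem dpow_two_pow_eq_iterate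
    (R : Type*) [CommRing R] (h2 : (2 : R) = 0) (I : Ideal R)
    (γ : DividedPowerStructure R I) (r : ℕ) :
    ∀ x ∈ I, γ.dpow (2 ^ r) x = (γ.dpow 2)^[r] x := by
  intro x hx
  induction r with
  | zero => simpa using γ.dpow_one x hx
  | succ r ih =>
    rw [Function.iterate_succ_apply', ← ih, γ.dpow_two_dpow (Nat.two_pow_pos r) hx,
      Nat.cast_eq_one_of_odd h2 (Nat.odd_centralBinom_two_pow_div_two r), one_mul, pow_succ]
end

section
/- Let R be a commutative ring in which 2 = 0, let I be an ideal of R, and let (γₙ) be a divided power structure on I. Let n ≥ 1 have binary expansion n = 2^{i₀} + 2^{i₁} + ⋯ + 2^{i_r} with i₀ < i₁ < ⋯ < i_r. Then for every x ∈ I, γₙ(x) = γ_{2^{i₀}}(x) · γ_{2^{i₁}}(x) ⋯ γ_{2^{i_r}}(x). (This uses that the multinomial coefficient n!/((2^{i₀})!⋯(2^{i_r})!) is odd, hence equals 1 in R.) -/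
/-!
Multiplying divided powers costs a binomial coefficient: `γₐ γ_b = C(a + b, a) γ_{a+b}`.
Building `n` from its binary digits, largest last, every step multiplies by `γ_{2^k}` with
`m < 2 ^ k` the part already built, and `C(2 ^ k + m, m)` is odd by Lucas's theorem
(`2 ^ k + m` and `m` share their last `k` binary digits), hence equals `1` in `R`.
-/

theorem Nat.ModEq.natCast_eq {R : Type*} [AddCommMonoidWithOne R] {p a b : ℕ} (hp : (p : R) = 0)
    (h : a ≡ b [MOD p]) : (a : R) = b := by
  simpa [hp, AddCommGroup.modEq_zero] using AddCommGroup.ModEq.natCast (M := R) h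

theorem Choose.choose_prime_pow_add_modEq_one {p : ℕ} [Fact p.Prime] :
    ∀ {k m : ℕ}, m < p ^ k → (p ^ k + m).choose m ≡ 1 [MOD p]
  | 0, m, hm => by simp [Nat.lt_one_iff.mp (by simpa using hm), Nat.ModEq.refl]
  | k + 1, m, hm => by
    have hp : 0 < p := (Fact.out : p.Prime).pos
    have hdiv : m / p < p ^ k := Nat.div_lt_of_lt_mul (by rwa [mul_comm, ← pow_succ])
    calc (p ^ (k + 1) + m).choose m
        ≡ ((p ^ (k + 1) + m) % p).choose (m % p) *
            ((p ^ (k + 1) + m) / p).choose (m / p) [MOD p] :=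
          choose_modEq_choose_mod_mul_choose_div_nat
      _ = (p ^ k + m / p).choose (m / p) := by
          rw [pow_succ', Nat.mul_add_mod, Nat.choose_self, one_mul, Nat.mul_add_div hp]
      _ ≡ 1 [MOD p] := choose_prime_pow_add_modEq_one hdiv

namespace DividedPowerStructure

variable {R : Type*} [CommRing R] {I : Ideal R} (γ : DividedPowerStructure R I)

theorem dpow_add_two_pow_of_lt (h2 : (2 : R) = 0) {m k : ℕ} (hm : m < 2 ^ k) {x : R}
    (hx : x ∈ I) :
    γ.dpow (2 ^ k + m) x = γ.dpow (2 ^ k) x * γ.dpow m x := by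
  have hchoose : ((m + 2 ^ k).choose m : R) = 1 := by
    simpa [add_comm] using
      (Choose.choose_prime_pow_add_modEq_one hm).natCast_eq (R := R) (by exact_mod_cast h2)
  rw [mul_comm, γ.dpow_mul m (2 ^ k) x hx, hchoose, one_mul, add_comm]

theorem dpow_sum_two_pow (h2 : (2 : R) = 0) (s : Finset ℕ) {x : R} (hx : x ∈ I) :
    γ.dpow (∑ t ∈ s, 2 ^ t) x = ∏ t ∈ s, γ.dpow (2 ^ t) x := by
  induction s using Finset.induction_on_max with
  | empty => simpa using γ.dpow_zero x hx
  | insert a s hlt ih =>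
    have ha : a ∉ s := fun h => (hlt a h).false
    rw [Finset.sum_insert ha, Finset.prod_insert ha,
      γ.dpow_add_two_pow_of_lt h2 (Nat.geomSum_lt le_rfl hlt) hx, ih]

end DividedPowerStructure

theorem dpow_eq_prod_dpow_two_pow_of_binary_expansion_general
    (R : Type*) [CommRing R] (h2 : (2 : R) = 0) (I : Ideal R)
    (γ : DividedPowerStructure R I)
    (n : ℕ) (r : ℕ) (i : Fin (r + 1) → ℕ) (hi : StrictMono i)
    (hbin : n = ∑ j, 2 ^ (i j)) :
    ∀ x ∈ I, γ.dpow n x = ∏ j, γ.dpow (2 ^ (i j)) x := by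
  intro x hx
  have hsum : n = ∑ t ∈ Finset.univ.image i, 2 ^ t := by
    rw [hbin, Finset.sum_image fun a _ b _ h => hi.injective h]
  rw [hsum, γ.dpow_sum_two_pow h2 _ hx, Finset.prod_image fun a _ b _ h => hi.injective h]

/-- In a ring where `2 = 0`, if `n = 2^{i₀} + ⋯ + 2^{i_r}` is the binary expansion of
`n ≥ 1` (so `i₀ < i₁ < ⋯ < i_r`), then `γₙ(x) = γ_{2^{i₀}}(x) ⋯ γ_{2^{i_r}}(x)`. -/
theorem dpow_eq_prod_dpow_two_pow_of_binary_expansion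
    (R : Type*) [CommRing R] (h2 : (2 : R) = 0) (I : Ideal R)
    (γ : DividedPowerStructure R I)
    (n : ℕ) (hn : 1 ≤ n) (r : ℕ) (i : Fin (r + 1) → ℕ) (hi : StrictMono i)
    (hbin : n = ∑ j, 2 ^ (i j)) :
    ∀ x ∈ I, γ.dpow n x = ∏ j, γ.dpow (2 ^ (i j)) x :=
  dpow_eq_prod_dpow_two_pow_of_binary_expansion_general R h2 I γ n r i hi hbin
end

section
/- Let R be a commutative ring, I an ideal of R, and (γₙ) a divided power structure on I. Let s₁, …, s_m be elements of I such that γ_k(s_i) = 0 for all i and all k ≥ 2. Then for every n ≥ 1, γₙ(s₁ + ⋯ + s_m) equals the n-th elementary symmetric polynomial in s₁, …, s_m: γₙ(Σ_{i=1}^m s_i) = Σ_{1 ≤ i₁ < ⋯ < i_n ≤ m} s_{i₁}·s_{i₂}⋯s_{i_n}. (Applied to sums of Pfister forms, this gives the formula for divided powers on I^r in the Witt ring when −1 is a square.) -/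
/-!
If `γₖ(x) = 0` for all `k ≥ 2`, the addition formula collapses to
`γₙ₊₁(x + y) = γₙ₊₁(y) + x γₙ(y)`, which is exactly the recursion
`eₙ₊₁(x, S) = eₙ₊₁(S) + x eₙ(S)` of the elementary symmetric polynomials; an induction on the
number of summands then identifies `γₙ(s₁ + ⋯ + s_m)` with `eₙ(s₁, …, s_m)`.
-/

namespace Multiset

variable {R : Type*} [CommSemiring R]

theorem esymm_cons_succ (a : R) (S : Multiset R) (n : ℕ) :
    (a ::ₘ S).esymm (n + 1) = S.esymm (n + 1) + a * S.esymm n := by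
  simp only [esymm, powersetCard_cons, map_add, sum_add, map_map, Function.comp_def, prod_cons,
    sum_map_mul_left]

end Multiset

namespace DividedPowerStructure

variable {R : Type*} [CommRing R] {I : Ideal R} (γ : DividedPowerStructure R I)

theorem dpow_eval_zero {n : ℕ} (hn : n ≠ 0) : γ.dpow n 0 = 0 := by
  simpa [zero_pow hn] using γ.dpow_smul n 0 0 I.zero_mem

theorem dpow_succ_add_of_dpow_eq_zero {x y : R} (hx : x ∈ I) (hy : y ∈ I)
    (hvan : ∀ k, 2 ≤ k → γ.dpow k x = 0) (n : ℕ) :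
    γ.dpow (n + 1) (x + y) = γ.dpow (n + 1) y + x * γ.dpow n y := by
  have high : ∀ i ∈ Finset.range n, γ.dpow (i + 2) x * γ.dpow (n + 1 - (i + 2)) y = 0 :=
    fun i _ => by rw [hvan (i + 2) (by omega), zero_mul]
  rw [γ.dpow_add _ x hx y hy, Finset.sum_range_succ', Finset.sum_range_succ',
    Finset.sum_eq_zero high, γ.dpow_zero x hx, γ.dpow_one x hx]
  simp only [zero_add, Nat.add_sub_cancel, Nat.sub_zero, one_mul, add_comm]

theorem dpow_multiset_sum_eq_esymm (S : Multiset R) (hS : ∀ x ∈ S, x ∈ I)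
    (hvan : ∀ x ∈ S, ∀ k, 2 ≤ k → γ.dpow k x = 0) (n : ℕ) :
    γ.dpow n S.sum = S.esymm n := by
  induction S using Multiset.induction_on generalizing n with
  | empty =>
    cases n with
    | zero => simp [Multiset.esymm, γ.dpow_zero 0 I.zero_mem]
    | succ n =>
      simp [Multiset.esymm, Multiset.powersetCard_zero_right, γ.dpow_eval_zero n.succ_ne_zero]
  | cons a S ih =>
    have ha : a ∈ I := hS a (Multiset.mem_cons_self a S)
    have hsum : S.sum ∈ I := multiset_sum_mem S fun x hx => hS x (Multiset.mem_cons_of_mem hx)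
    have ih' := ih (fun x hx => hS x (Multiset.mem_cons_of_mem hx))
      (fun x hx => hvan x (Multiset.mem_cons_of_mem hx))
    cases n with
    | zero => simp [Multiset.esymm, γ.dpow_zero _ (I.add_mem ha hsum)]
    | succ n =>
      rw [Multiset.sum_cons, γ.dpow_succ_add_of_dpow_eq_zero ha hsum
        (hvan a (Multiset.mem_cons_self a S)), ih', ih', Multiset.esymm_cons_succ]

end DividedPowerStructure

/-- If `s₁, …, s_m ∈ I` satisfy `γ_k(sᵢ) = 0` for all `k ≥ 2`, then
`γₙ(s₁ + ⋯ + s_m)` is the `n`-th elementary symmetric polynomial in the `sᵢ`. -/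
theorem dpow_sum_eq_esymm
    (R : Type*) [CommRing R] (I : Ideal R)
    (γ : DividedPowerStructure R I)
    (m : ℕ) (s : Fin m → R) (hs : ∀ i, s i ∈ I)
    (hvan : ∀ (i : Fin m), ∀ k : ℕ, 2 ≤ k → γ.dpow k (s i) = 0) :
    ∀ n : ℕ, 1 ≤ n →
      γ.dpow n (∑ i, s i) =
        ∑ A ∈ Finset.powersetCard n (Finset.univ : Finset (Fin m)), ∏ i ∈ A, s i := by
  intro n _
  rw [← Finset.esymm_map_val]
  refine γ.dpow_multiset_sum_eq_esymm _ ?_ ?_ n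
  · simpa using hs
  · simpa using hvan
end
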